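/- arXiv:1903.09851 — 2 statements merged into one kernel-verified Lean document; each statement's English description precedes it below -/
import Mathlib

section
/- Let p = 2, λ a 2-regular partition of n, λ^{JS} its JS-truncation, and let k be maximal such that λ_{2k−1} > 0. Then |λ^{JS}| ≥ (n + k)/2. -/
open Classical in
/-- One step of the JS-truncation procedure: comparing (0-indexed) rows `r` and `r+1`,
if row `r+1` is nonempty and has parity opposite to row `r`, remove one box from each of
rows `r+1, …, l`, where `l ≥ r+1` is minimal such that `μ_l > μ_{l+1} + 1` or `μ_{l+1} = 0`
(the maximal consecutive block below row `r`). -/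
noncomputable def jsStep (r : ℕ) (mu : ℕ → ℕ) : ℕ → ℕ :=
  if mu (r + 1) = 0 ∨ mu (r + 1) % 2 = mu r % 2 then mu
  else if h : ∃ l, r + 1 ≤ l ∧ (mu (l + 1) + 1 < mu l ∨ mu (l + 1) = 0) then
    fun j => if r + 1 ≤ j ∧ j ≤ Nat.find h then mu j - 1 else mu j
  else mu

/-- Iterating the JS-steps: `jsIter mu r` is the partition `λ^{r+1}` of the procedure. -/
noncomputable def jsIter (mu : ℕ → ℕ) : ℕ → ℕ → ℕ
  | 0 => mu
  | r + 1 => jsStep r (jsIter mu r)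

/-- The JS-truncation `λ^{JS}` of a 2-regular partition of `n` (the procedure stabilizes
after at most `n` steps). -/
noncomputable def jsPart (n : ℕ) (mu : ℕ → ℕ) : ℕ → ℕ := jsIter mu n

lemma jsStep_lower (r : ℕ) (mu : ℕ → ℕ) (j : ℕ) : mu j - 1 ≤ jsStep r mu j := by
  unfold jsStep
  split
  · omega
  · split
    · dsimp only
      split <;> omega
    · omega

lemma jsStep_eq_of_le (r : ℕ) (mu : ℕ → ℕ) (j : ℕ) (hj : j ≤ r) : jsStep r mu j = mu j := by
  unfold jsStep
  split
  · rfl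
  · split
    · dsimp only
      rw [if_neg (by omega)]
    · rfl

lemma jsIter_lower (mu : ℕ → ℕ) (j s : ℕ) : mu j - j ≤ jsIter mu s j := by
  have key : ∀ s, mu j - min s j ≤ jsIter mu s j := by
    intro s
    induction s with
    | zero => simp [jsIter]
    | succ s ih =>
      show mu j - min (s+1) j ≤ jsStep s (jsIter mu s) j
      rcases le_or_gt j s with h | h
      · rw [jsStep_eq_of_le s _ j h]
        have : min (s+1) j = min s j := by omega
        rw [this]; exact ih
      · have h1 := jsStep_lower s (jsIter mu s) j
        omega
  have := key s
  have h2 : min s j ≤ j := min_le_right _ _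
  omega

lemma sum_range_two_mul (f : ℕ → ℕ) (m : ℕ) :
    ∑ j ∈ Finset.range (2 * m), f j = ∑ i ∈ Finset.range m, (f (2 * i) + f (2 * i + 1)) := by
  induction m with
  | zero => simp
  | succ m ih =>
    have : 2 * (m + 1) = 2 * m + 1 + 1 := by ring
    rw [this, Finset.sum_range_succ, Finset.sum_range_succ, ih, Finset.sum_range_succ]
    omega


/-- If `k` is maximal such that `λ_{2k−1} > 0` (1-indexed; 0-indexed `λ (2k−2) ≠ 0` and
`λ (2k) = 0`), then `|λ^{JS}| ≥ (n + k)/2`. -/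
theorem stmt_5 (n : ℕ) (hpos : 0 < n) (lam : ℕ → ℕ)
    (hdec : ∀ j, lam (j + 1) ≤ lam j)
    (hreg : ∀ j, lam (j + 1) ≠ 0 → lam (j + 1) < lam j)
    (hsum : ∑ j ∈ Finset.range n, lam j = n)
    (k : ℕ) (hk : 1 ≤ k) (hk1 : lam (2 * k - 2) ≠ 0) (hk2 : lam (2 * k) = 0) :
    n + k ≤ 2 * ∑ j ∈ Finset.range n, jsPart n lam j := by
  -- monotonicity
  have hmono : ∀ a b, a ≤ b → lam b ≤ lam a := by
    intro a b hab
    obtain ⟨d, rfl⟩ := Nat.exists_eq_add_of_le hab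
    clear hab
    induction d with
    | zero => simp
    | succ d ih =>
      rw [show a + (d + 1) = a + d + 1 by ring]
      have := hdec (a + d)
      omega
  -- strict decrease distance
  have hdist : ∀ d a, lam (a + d) ≠ 0 → lam (a + d) + d ≤ lam a := by
    intro d
    induction d with
    | zero => intro a h; simp
    | succ d ih =>
      intro a h
      rw [show a + (d + 1) = a + d + 1 by ring] at h ⊢
      have h1 : lam (a + d + 1) < lam (a + d) := hreg (a + d) h
      have h2 : lam (a + d) ≠ 0 := by omega
      have := ih a h2
      omega
  -- lam 0 bounded by n
  have hle0 : lam 0 ≤ n := by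
    rw [← hsum]
    exact Finset.single_le_sum (f := lam) (fun i _ => Nat.zero_le _)
      (Finset.mem_range.mpr hpos)
  -- n ≥ 2k - 1
  have hn2k : 2 * k - 1 ≤ n := by
    have := hdist (2 * k - 2) 0 (by simpa using hk1)
    rw [Nat.zero_add] at this
    omega
  -- lam x = 0 for x ≥ n
  have hlamn : lam n = 0 := by
    by_contra h
    have := hdist n 0 (by simpa using h)
    rw [Nat.zero_add] at this
    omega
  have hzn : ∀ x, n ≤ x → lam x = 0 := fun x hx =>
    Nat.le_zero.mp (hlamn ▸ hmono n x hx)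
  have hz2k : ∀ x, 2 * k ≤ x → lam x = 0 := fun x hx =>
    Nat.le_zero.mp (hk2 ▸ hmono (2 * k) x hx)
  -- sum over range (2k) equals n
  set M := max n (2 * k) with hM
  have hsub1 : ∑ j ∈ Finset.range n, lam j = ∑ j ∈ Finset.range M, lam j :=
    Finset.sum_subset (Finset.range_subset_range.mpr (le_max_left _ _))
      (fun x _ hx => hzn x (by simpa using Nat.le_of_not_lt (fun h => hx (Finset.mem_range.mpr h))))
  have hsub2 : ∑ j ∈ Finset.range (2 * k), lam j = ∑ j ∈ Finset.range M, lam j :=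
    Finset.sum_subset (Finset.range_subset_range.mpr (le_max_right _ _))
      (fun x _ hx => hz2k x (by simpa using Nat.le_of_not_lt (fun h => hx (Finset.mem_range.mpr h))))
  have hsum2k : ∑ j ∈ Finset.range (2 * k), lam j = n := by rw [hsub2, ← hsub1, hsum]
  -- per-term bound for i < k
  have hterm : ∀ i, i < k → lam (2 * i) + lam (2 * i + 1) + 1 ≤ 2 * jsPart n lam i := by
    intro i hi
    have h2i : lam (2 * i) ≠ 0 := by
      intro h0
      have := hmono (2 * i) (2 * k - 2) (by omega)
      omega
    have hA : lam (2 * i) + i ≤ lam i := by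
      have := hdist i i (by rwa [show i + i = 2 * i by ring])
      rwa [show i + i = 2 * i by ring] at this
    have hB : lam i - i ≤ jsPart n lam i := jsIter_lower lam i n
    have hC : lam (2 * i + 1) + 1 ≤ lam (2 * i) := by
      by_cases h : lam (2 * i + 1) = 0
      · omega
      · exact hreg (2 * i) h
    omega
  -- put it together
  have hkn : k ≤ n := by omega
  have hmain : ∑ i ∈ Finset.range k, (lam (2 * i) + lam (2 * i + 1) + 1) ≤
      ∑ i ∈ Finset.range k, 2 * jsPart n lam i :=
    Finset.sum_le_sum (fun i hi => hterm i (Finset.mem_range.mp hi))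
  have hsplit : ∑ i ∈ Finset.range k, (lam (2 * i) + lam (2 * i + 1) + 1) = n + k := by
    rw [Finset.sum_add_distrib, ← sum_range_two_mul, hsum2k]
    simp
  have hsub3 : ∑ i ∈ Finset.range k, jsPart n lam i ≤ ∑ j ∈ Finset.range n, jsPart n lam j :=
    Finset.sum_le_sum_of_subset (Finset.range_subset_range.mpr hkn)
  rw [← Finset.mul_sum] at hmain
  omega
end

section
/- Let n = ab ≥ 6 with a, b ≥ 3, F an algebraically closed field of characteristic p > 0, and G_{a,b} = (S_a ≀ S_b) ∩ A_n. Then dim (S_2^*)^{G_{a,b}} = 1. -/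
abbrev Pair (n : ℕ) := {s : Finset (Fin n) // s.card = 2}
abbrev M2 (F : Type) [Field F] (n : ℕ) := Pair n → F
def Ksub (F : Type) [Field F] (n : ℕ) : Submodule F (M2 F n) :=
  Submodule.span F
    ({fun _ => 1} ∪ Set.range (fun i : Fin n => fun A : Pair n => if i ∈ A.1 then (1 : F) else 0))
abbrev S2quot (F : Type) [Field F] (n : ℕ) := M2 F n ⧸ Ksub F n
def permPair {n : ℕ} (σ : Equiv.Perm (Fin n)) (A : Pair n) : Pair n :=
  ⟨A.1.image σ, by rw [Finset.card_image_of_injective _ σ.injective]; exact A.2⟩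
def wreathPres (n a : ℕ) (σ : Equiv.Perm (Fin n)) : Prop :=
  ∀ x y : Fin n, ((x : ℕ) / a = (y : ℕ) / a) ↔ ((σ x : ℕ) / a = (σ y : ℕ) / a)
def S2invW (F : Type) [Field F] (n a : ℕ) (q : S2quot F n) : Prop :=
  ∀ σ : Equiv.Perm (Fin n), σ ∈ alternatingGroup (Fin n) → wreathPres n a σ →
    ∀ v : M2 F n, (Submodule.Quotient.mk v : S2quot F n) = q →
      (Submodule.Quotient.mk (fun A => v (permPair σ A)) : S2quot F n) = q

section Basic
variable {F : Type} [Field F] {n : ℕ}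

/-- the pair {x,y} -/
def pr {n : ℕ} (x y : Fin n) (h : x ≠ y) : Pair n := ⟨{x, y}, Finset.card_pair h⟩

lemma pr_comm (x y : Fin n) (h : x ≠ y) : pr x y h = pr y x h.symm :=
  Subtype.ext (Finset.pair_comm x y)

lemma permPair_pr (σ : Equiv.Perm (Fin n)) (x y : Fin n) (h : x ≠ y) :
    permPair σ (pr x y h) = pr (σ x) (σ y) (fun he => h (σ.injective he)) := by
  apply Subtype.ext
  simp [permPair, pr, Finset.image_insert, Finset.image_singleton]

lemma pair_eq_pr (A : Pair n) : ∃ x y, ∃ (h : x ≠ y), A = pr x y h := by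
  obtain ⟨x, y, hxy, hA⟩ := Finset.card_eq_two.mp A.2
  exact ⟨x, y, hxy, Subtype.ext hA⟩

lemma mem_Ksub_iff (u : M2 F n) :
    u ∈ Ksub F n ↔ ∃ lam : F, ∃ mu : Fin n → F,
      ∀ x y (h : x ≠ y), u (pr x y h) = lam + mu x + mu y := by
  constructor
  · intro hu
    induction hu using Submodule.span_induction with
    | mem f hf =>
      rcases hf with hf | ⟨i, rfl⟩
      · exact ⟨1, 0, fun x y h => by simp [Set.mem_singleton_iff.mp hf]⟩
      · refine ⟨0, fun j => if j = i then 1 else 0, fun x y h => ?_⟩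
        have hmem : (pr x y h).1 = {x, y} := rfl
        by_cases hx : i = x
        · subst hx
          have hy' : y ≠ i := fun he => h he.symm
          simp [hmem, hy']
        · by_cases hy : i = y
          · subst hy
            have hx' : x ≠ i := fun he => hx he.symm
            simp [hmem, hx']
          · have hx' : x ≠ i := fun he => hx he.symm
            have hy' : y ≠ i := fun he => hy he.symm
            simp [hmem, hx', hy', Ne.symm hx, Ne.symm hy, hx, hy]
    | zero => exact ⟨0, 0, fun x y h => by simp⟩
    | add f g _ _ hf hg =>
      obtain ⟨l1, m1, h1⟩ := hf
      obtain ⟨l2, m2, h2⟩ := hg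
      exact ⟨l1 + l2, m1 + m2, fun x y h => by
        simp only [Pi.add_apply, h1 x y h, h2 x y h]; ring⟩
    | smul c f _ hf =>
      obtain ⟨l1, m1, h1⟩ := hf
      exact ⟨c * l1, c • m1, fun x y h => by
        simp only [Pi.smul_apply, smul_eq_mul, h1 x y h]; ring⟩
  · rintro ⟨lam, mu, hu⟩
    have hrepr : u = lam • (fun _ => (1:F)) +
        ∑ i : Fin n, mu i • (fun A : Pair n => if i ∈ A.1 then (1:F) else 0) := by
      funext A
      obtain ⟨x, y, hxy, rfl⟩ := pair_eq_pr A
      rw [hu x y hxy]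
      simp only [Pi.add_apply, Pi.smul_apply, Finset.sum_apply, smul_eq_mul, mul_ite,
        mul_one, mul_zero]
      rw [Finset.sum_ite_mem, Finset.univ_inter]
      have hmem : ((pr x y hxy).1 : Finset (Fin n)) = {x, y} := rfl
      rw [hmem, Finset.sum_pair hxy]; ring
    rw [hrepr]
    apply Submodule.add_mem
    · exact Submodule.smul_mem _ _ (Submodule.subset_span (Or.inl rfl))
    · exact Submodule.sum_mem _ fun i _ =>
        Submodule.smul_mem _ _ (Submodule.subset_span (Or.inr ⟨i, rfl⟩))

end Basic
section Rsect
variable {F : Type} [Field F] {n : ℕ}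

/-- totalized value of `v` on the pair `{x,y}` -/
def Vv (v : M2 F n) (x y : Fin n) : F := if h : x = y then 0 else v (pr x y h)

lemma Vv_symm (v : M2 F n) (x y : Fin n) : Vv v x y = Vv v y x := by
  unfold Vv
  by_cases h : x = y
  · subst h; simp
  · rw [dif_neg h, dif_neg (Ne.symm h), pr_comm]

lemma Vv_eq (v : M2 F n) (x y : Fin n) (h : x ≠ y) : Vv v x y = v (pr x y h) := dif_neg h

/-- rectangle functional -/
def Rv (v : M2 F n) (x y z t : Fin n) : F := Vv v x y + Vv v z t - Vv v x z - Vv v y t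

lemma Rv_g1 (v : M2 F n) (x y z t : Fin n) : Rv v x y z t = Rv v z t x y := by
  unfold Rv; rw [Vv_symm v z x, Vv_symm v t y]; ring

lemma Rv_g2 (v : M2 F n) (x y z t : Fin n) : Rv v x y z t = Rv v y x t z := by
  unfold Rv
  rw [Vv_symm v y x, Vv_symm v t z, Vv_symm v y t, Vv_symm v x z]; ring

lemma Rv_anti23 (v : M2 F n) (x y z t : Fin n) : Rv v x y z t = - Rv v x z y t := by
  unfold Rv; ring

lemma Rv_cocycle1 (v : M2 F n) (x y z t s : Fin n) :
    Rv v x y z t = Rv v x y z s + Rv v s y z t := by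
  unfold Rv; rw [Vv_symm v z s, Vv_symm v s y]; ring

lemma Rv_cocycle2 (v : M2 F n) (x y z t s : Fin n) :
    Rv v x y z t = Rv v x y s t + Rv v x s z t := by
  unfold Rv; rw [Vv_symm v s t]; ring

end Rsect

section BlockSect
variable {a b : ℕ}

lemma bval_lt (ha : 0 < a) (x : Fin (a * b)) : (x : ℕ) / a < b :=
  (Nat.div_lt_iff_lt_mul ha).mpr (Nat.lt_of_lt_of_eq x.2 (mul_comm a b))

lemma wreathPres_of_fix (σ : Equiv.Perm (Fin (a * b)))
    (h : ∀ x : Fin (a * b), ((σ x : ℕ) / a) = (x : ℕ) / a) : wreathPres (a * b) a σ := by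
  intro x y; rw [h x, h y]

lemma wreathPres_mul {σ τ : Equiv.Perm (Fin (a * b))}
    (hσ : wreathPres (a * b) a σ) (hτ : wreathPres (a * b) a τ) :
    wreathPres (a * b) a (σ * τ) := by
  intro x y
  exact (hτ x y).trans (hσ (τ x) (τ y))

lemma wreathPres_swap {u w : Fin (a * b)} (h : (u : ℕ) / a = (w : ℕ) / a) :
    wreathPres (a * b) a (Equiv.swap u w) := by
  apply wreathPres_of_fix
  intro x
  rcases eq_or_ne x u with rfl | hxu
  · rw [Equiv.swap_apply_left]; exact h.symm
  · rcases eq_or_ne x w with rfl | hxw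
    · rw [Equiv.swap_apply_right]; exact h
    · rw [Equiv.swap_apply_of_ne_of_ne hxu hxw]

/-- lift a permutation of blocks to a permutation of points -/
def blockLift (π : Equiv.Perm (Fin b)) : Equiv.Perm (Fin (a * b)) :=
  ((finCongr (mul_comm a b) : Fin (a * b) ≃ Fin (b * a)).trans
    (finProdFinEquiv.symm.trans ((π.prodCongr (Equiv.refl (Fin a))).trans
      (finProdFinEquiv.trans (finCongr (mul_comm b a))))))

lemma blockLift_val (ha : 0 < a) (π : Equiv.Perm (Fin b)) (x : Fin (a * b)) :
    ((blockLift π x : ℕ)) = (x : ℕ) % a + a * (π ⟨(x : ℕ) / a, bval_lt ha x⟩ : ℕ) := by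
  simp only [blockLift, Equiv.trans_apply, finCongr_apply, Equiv.prodCongr_apply,
    Equiv.coe_refl, Prod.map, Fin.coe_cast]
  show ((finProdFinEquiv (π (finProdFinEquiv.symm (Fin.cast (mul_comm a b) x)).1,
      (finProdFinEquiv.symm (Fin.cast (mul_comm a b) x)).2) : Fin (b*a)) : ℕ) = _
  have h1 : (finProdFinEquiv.symm (Fin.cast (mul_comm a b) x)).1
      = (⟨(x : ℕ) / a, bval_lt ha x⟩ : Fin b) := by
    apply Fin.ext
    show ((Fin.cast (mul_comm a b) x).divNat : ℕ) = (x : ℕ) / a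
    rw [Fin.coe_divNat, Fin.coe_cast]
  have h2 : ((finProdFinEquiv.symm (Fin.cast (mul_comm a b) x)).2 : ℕ) = (x : ℕ) % a := by
    show ((Fin.cast (mul_comm a b) x).modNat : ℕ) = (x : ℕ) % a
    rw [Fin.coe_modNat, Fin.coe_cast]
  rw [h1]
  show ((finProdFinEquiv.symm (Fin.cast (mul_comm a b) x)).2 : ℕ)
      + a * (π ⟨(x : ℕ) / a, bval_lt ha x⟩ : ℕ) = _
  rw [h2]

lemma blockLift_block (ha : 0 < a) (π : Equiv.Perm (Fin b)) (x : Fin (a * b)) :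
    ((blockLift π x : ℕ)) / a = (π ⟨(x : ℕ) / a, bval_lt ha x⟩ : ℕ) := by
  rw [blockLift_val ha π x, Nat.add_mul_div_left _ _ ha,
    Nat.div_eq_of_lt (Nat.mod_lt _ ha), Nat.zero_add]

lemma wreathPres_blockLift (ha : 0 < a) (π : Equiv.Perm (Fin b)) :
    wreathPres (a * b) a (blockLift π) := by
  intro x y
  rw [blockLift_block ha π x, blockLift_block ha π y]
  constructor
  · intro h
    exact congrArg Fin.val (congrArg π (Fin.ext h))
  · intro h
    exact congrArg Fin.val (π.injective (Fin.ext h))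

end BlockSect
section PermThree
variable {α : Type*} [DecidableEq α]

open Equiv

lemma exists_perm_three (u1 u2 u3 w1 w2 w3 : α)
    (h12 : u1 ≠ u2) (h13 : u1 ≠ u3) (h23 : u2 ≠ u3)
    (g12 : w1 ≠ w2) (g13 : w1 ≠ w3) (g23 : w2 ≠ w3) :
    ∃ π : Equiv.Perm α, π u1 = w1 ∧ π u2 = w2 ∧ π u3 = w3 := by
  set s1 := Equiv.swap u1 w1 with hs1
  set u2' := s1 u2 with hu2'
  set s2 := Equiv.swap u2' w2 with hs2
  set u3' := s2 (s1 u3) with hu3'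
  set s3 := Equiv.swap u3' w3 with hs3
  have hinj1 : Function.Injective s1 := s1.injective
  have hinj21 : Function.Injective (fun x => s2 (s1 x)) := fun x y h =>
    s1.injective (s2.injective h)
  have e1 : s1 u1 = w1 := Equiv.swap_apply_left _ _
  have hu2'w1 : u2' ≠ w1 := fun h => h12 (hinj1 (show s1 u1 = s1 u2 by rw [e1, ← h, hu2']))
  have hw1 : s2 (s1 u1) = w1 := by
    rw [e1, hs2]
    exact Equiv.swap_apply_of_ne_of_ne (Ne.symm hu2'w1) g12
  have hw2 : s2 (s1 u2) = w2 := by rw [← hu2', hs2]; exact Equiv.swap_apply_left _ _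
  have hu3'w1 : u3' ≠ w1 := fun h => h13 (hinj21 (by
    show s2 (s1 u1) = s2 (s1 u3); rw [hw1, ← h, hu3']))
  have hu3'w2 : u3' ≠ w2 := fun h => h23 (hinj21 (by
    show s2 (s1 u2) = s2 (s1 u3); rw [hw2, ← h, hu3']))
  refine ⟨(s3 * s2) * s1, ?_, ?_, ?_⟩
  · show s3 (s2 (s1 u1)) = w1
    rw [hw1, hs3]
    exact Equiv.swap_apply_of_ne_of_ne (Ne.symm hu3'w1) g13
  · show s3 (s2 (s1 u2)) = w2
    rw [hw2, hs3]
    exact Equiv.swap_apply_of_ne_of_ne (Ne.symm hu3'w2) g23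
  · show s3 (s2 (s1 u3)) = w3
    rw [← hu3', hs3]
    exact Equiv.swap_apply_left _ _

end PermThree
section TransSect
open Equiv
variable {a b : ℕ}

lemma ne_of_block_ne {p q : Fin (a * b)} (h : (p : ℕ) / a ≠ (q : ℕ) / a) : p ≠ q :=
  fun he => h (by rw [he])

lemma swap_block_fix {u w : Fin (a * b)} (h : (u : ℕ) / a = (w : ℕ) / a)
    (p : Fin (a * b)) : ((Equiv.swap u w p : Fin (a * b)) : ℕ) / a = (p : ℕ) / a := by
  rcases eq_or_ne p u with rfl | hpu
  · rw [Equiv.swap_apply_left]; exact h.symm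
  · rcases eq_or_ne p w with rfl | hpw
    · rw [Equiv.swap_apply_right]; exact h
    · rw [Equiv.swap_apply_of_ne_of_ne hpu hpw]

lemma mkInBlock_lt (ha : 0 < a) {B j : ℕ} (hB : B < b) (hj : j < a) : a * B + j < a * b :=
  calc a * B + j < a * B + a := Nat.add_lt_add_left hj _
    _ = a * (B + 1) := by ring
    _ ≤ a * b := Nat.mul_le_mul_left a hB

lemma mkInBlock_block (ha : 0 < a) {B j : ℕ} (hj : j < a) : (a * B + j) / a = B := by
  rw [Nat.mul_add_div ha, Nat.div_eq_of_lt hj, Nat.add_zero]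

lemma exists_block_pair (ha : 3 ≤ a) {B : ℕ} (hB : B < b) (z0 : Fin (a * b)) :
    ∃ p q : Fin (a * b), p ≠ q ∧ (p : ℕ) / a = B ∧ (q : ℕ) / a = B ∧ p ≠ z0 ∧ q ≠ z0 := by
  have ha0 : 0 < a := by omega
  set c0 : Fin (a * b) := ⟨a * B + 0, mkInBlock_lt ha0 hB (by omega)⟩ with hc0
  set c1 : Fin (a * b) := ⟨a * B + 1, mkInBlock_lt ha0 hB (by omega)⟩ with hc1
  set c2 : Fin (a * b) := ⟨a * B + 2, mkInBlock_lt ha0 hB (by omega)⟩ with hc2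
  have b0 : (c0 : ℕ) / a = B := mkInBlock_block ha0 (by omega)
  have b1 : (c1 : ℕ) / a = B := mkInBlock_block ha0 (by omega)
  have b2 : (c2 : ℕ) / a = B := mkInBlock_block ha0 (by omega)
  have d01 : c0 ≠ c1 := fun h => by simpa [hc0, hc1, Fin.ext_iff] using h
  have d02 : c0 ≠ c2 := fun h => by simpa [hc0, hc2, Fin.ext_iff] using h
  have d12 : c1 ≠ c2 := fun h => by simpa [hc1, hc2, Fin.ext_iff] using h
  rcases eq_or_ne z0 c0 with rfl | h0
  · exact ⟨c1, c2, d12, b1, b2, Ne.symm d01, Ne.symm d02⟩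
  · rcases eq_or_ne z0 c1 with rfl | h1
    · exact ⟨c0, c2, d02, b0, b2, Ne.symm (Ne.symm h0).symm, Ne.symm d12⟩
    · exact ⟨c0, c1, d01, b0, b1, Ne.symm h0, Ne.symm h1⟩

set_option maxHeartbeats 4000000 in
lemma trans_lemma (ha : 3 ≤ a) (hb : 3 ≤ b) (x y z t x0 y0 z0 t0 : Fin (a * b))
    (hxy : x ≠ y) (bxy : (x : ℕ) / a = (y : ℕ) / a)
    (bxz : (x : ℕ) / a ≠ (z : ℕ) / a) (bxt : (x : ℕ) / a ≠ (t : ℕ) / a)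
    (bzt : (z : ℕ) / a ≠ (t : ℕ) / a)
    (hxy0 : x0 ≠ y0) (bxy0 : (x0 : ℕ) / a = (y0 : ℕ) / a)
    (bxz0 : (x0 : ℕ) / a ≠ (z0 : ℕ) / a) (bxt0 : (x0 : ℕ) / a ≠ (t0 : ℕ) / a)
    (bzt0 : (z0 : ℕ) / a ≠ (t0 : ℕ) / a) :
    ∃ σ : Equiv.Perm (Fin (a * b)), σ ∈ alternatingGroup (Fin (a * b)) ∧
      wreathPres (a * b) a σ ∧ σ x = x0 ∧ σ y = y0 ∧ σ z = z0 ∧ σ t = t0 := by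
  have ha0 : 0 < a := by omega
  set Bx : Fin b := ⟨(x : ℕ) / a, bval_lt ha0 x⟩ with hBx
  set Bz : Fin b := ⟨(z : ℕ) / a, bval_lt ha0 z⟩ with hBz
  set Bt : Fin b := ⟨(t : ℕ) / a, bval_lt ha0 t⟩ with hBt
  set Bx0 : Fin b := ⟨(x0 : ℕ) / a, bval_lt ha0 x0⟩ with hBx0
  set Bz0 : Fin b := ⟨(z0 : ℕ) / a, bval_lt ha0 z0⟩ with hBz0
  set Bt0 : Fin b := ⟨(t0 : ℕ) / a, bval_lt ha0 t0⟩ with hBt0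
  obtain ⟨π, hπx, hπz, hπt⟩ := exists_perm_three Bx Bz Bt Bx0 Bz0 Bt0
    (fun h => bxz (congrArg Fin.val h)) (fun h => bxt (congrArg Fin.val h))
    (fun h => bzt (congrArg Fin.val h))
    (fun h => bxz0 (congrArg Fin.val h)) (fun h => bxt0 (congrArg Fin.val h))
    (fun h => bzt0 (congrArg Fin.val h))
  set σ1 := blockLift π with hσ1
  have hwσ1 : wreathPres (a * b) a σ1 := wreathPres_blockLift ha0 π
  have bx1 : ((σ1 x : Fin (a * b)) : ℕ) / a = (x0 : ℕ) / a := by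
    rw [hσ1, blockLift_block ha0 π x]
    exact congrArg Fin.val (hπx)
  have by1 : ((σ1 y : Fin (a * b)) : ℕ) / a = (x0 : ℕ) / a := by
    rw [hσ1, blockLift_block ha0 π y]
    have : (⟨(y : ℕ) / a, bval_lt ha0 y⟩ : Fin b) = Bx := Fin.ext bxy.symm
    rw [this]
    exact congrArg Fin.val (hπx)
  have bz1 : ((σ1 z : Fin (a * b)) : ℕ) / a = (z0 : ℕ) / a := by
    rw [hσ1, blockLift_block ha0 π z]
    exact congrArg Fin.val (hπz)
  have bt1 : ((σ1 t : Fin (a * b)) : ℕ) / a = (t0 : ℕ) / a := by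
    rw [hσ1, blockLift_block ha0 π t]
    exact congrArg Fin.val (hπt)
  set x1 := σ1 x
  set y1 := σ1 y
  set z1 := σ1 z
  set t1 := σ1 t
  set ρa := Equiv.swap x1 x0 with hρa
  have hwa : wreathPres (a * b) a ρa := wreathPres_swap bx1
  set y2 := ρa y1 with hy2
  have hby2 : (y2 : ℕ) / a = (x0 : ℕ) / a := by
    rw [hy2, hρa, swap_block_fix bx1 y1]; exact by1
  have hy2x0 : y2 ≠ x0 := by
    intro h
    have h2 : ρa y1 = ρa x1 := by rw [Equiv.swap_apply_left]; exact h
    exact hxy (σ1.injective (ρa.injective h2)).symm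
  set ρb := Equiv.swap y2 y0 with hρb
  have hwb : wreathPres (a * b) a ρb := wreathPres_swap (hby2.trans bxy0)
  set ρc := Equiv.swap z1 z0 with hρc
  have hwc : wreathPres (a * b) a ρc := wreathPres_swap bz1
  set ρd := Equiv.swap t1 t0 with hρd
  have hwd : wreathPres (a * b) a ρd := wreathPres_swap bt1
  set σ0 := ((ρd * ρc) * ρb) * (ρa * σ1) with hσ0
  have hwσ0 : wreathPres (a * b) a σ0 :=
    wreathPres_mul (wreathPres_mul (wreathPres_mul hwd hwc) hwb) (wreathPres_mul hwa hwσ1)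
  -- inequality helpers
  have bx1z1 : (x1 : ℕ) / a ≠ (z1 : ℕ) / a := by rw [bx1, bz1]; exact bxz0
  have bx1t1 : (x1 : ℕ) / a ≠ (t1 : ℕ) / a := by rw [bx1, bt1]; exact bxt0
  have bz1t1 : (z1 : ℕ) / a ≠ (t1 : ℕ) / a := by rw [bz1, bt1]; exact bzt0
  have by2z1 : (y2 : ℕ) / a ≠ (z1 : ℕ) / a := by rw [hby2, bz1]; exact bxz0
  have by2t1 : (y2 : ℕ) / a ≠ (t1 : ℕ) / a := by rw [hby2, bt1]; exact bxt0
  have hσ0x : σ0 x = x0 := by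
    rw [hσ0]
    simp only [Equiv.Perm.mul_apply]
    rw [show ρa (σ1 x) = x0 from Equiv.swap_apply_left x1 x0, hρb,
      Equiv.swap_apply_of_ne_of_ne (Ne.symm hy2x0) hxy0, hρc,
      Equiv.swap_apply_of_ne_of_ne
        (Ne.symm (ne_of_block_ne ((by rw [bz1]; exact bxz0.symm) : (z1:ℕ)/a ≠ (x0:ℕ)/a)))
        (ne_of_block_ne bxz0), hρd,
      Equiv.swap_apply_of_ne_of_ne
        (Ne.symm (ne_of_block_ne ((by rw [bt1]; exact bxt0.symm) : (t1:ℕ)/a ≠ (x0:ℕ)/a)))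
        (ne_of_block_ne bxt0)]
  have hσ0y : σ0 y = y0 := by
    rw [hσ0]
    simp only [Equiv.Perm.mul_apply]
    rw [show ρb (ρa (σ1 y)) = y0 from Equiv.swap_apply_left y2 y0, hρc,
      Equiv.swap_apply_of_ne_of_ne
        (ne_of_block_ne ((by rw [bz1, ← bxy0]; exact bxz0) : (y0:ℕ)/a ≠ (z1:ℕ)/a))
        (ne_of_block_ne (by rw [← bxy0]; exact bxz0)), hρd,
      Equiv.swap_apply_of_ne_of_ne
        (ne_of_block_ne ((by rw [bt1, ← bxy0]; exact bxt0) : (y0:ℕ)/a ≠ (t1:ℕ)/a))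
        (ne_of_block_ne (by rw [← bxy0]; exact bxt0))]
  have hσ0z : σ0 z = z0 := by
    rw [hσ0]
    simp only [Equiv.Perm.mul_apply]
    rw [hρa, Equiv.swap_apply_of_ne_of_ne (ne_of_block_ne bx1z1.symm : z1 ≠ x1)
      (ne_of_block_ne ((by rw [bz1]; exact bxz0.symm) : (z1:ℕ)/a ≠ (x0:ℕ)/a)), hρb,
      Equiv.swap_apply_of_ne_of_ne (ne_of_block_ne by2z1.symm)
        (ne_of_block_ne ((by rw [bz1, ← bxy0]; exact bxz0.symm) : (z1:ℕ)/a ≠ (y0:ℕ)/a)),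
      show ρc z1 = z0 from Equiv.swap_apply_left z1 z0, hρd,
      Equiv.swap_apply_of_ne_of_ne
        (ne_of_block_ne ((by rw [bt1]; exact bzt0) : (z0:ℕ)/a ≠ (t1:ℕ)/a))
        (ne_of_block_ne bzt0)]
  have hσ0t : σ0 t = t0 := by
    rw [hσ0]
    simp only [Equiv.Perm.mul_apply]
    rw [hρa, Equiv.swap_apply_of_ne_of_ne (ne_of_block_ne bx1t1.symm : t1 ≠ x1)
      (ne_of_block_ne ((by rw [bt1]; exact bxt0.symm) : (t1:ℕ)/a ≠ (x0:ℕ)/a)), hρb,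
      Equiv.swap_apply_of_ne_of_ne (ne_of_block_ne by2t1.symm)
        (ne_of_block_ne ((by rw [bt1, ← bxy0]; exact bxt0.symm) : (t1:ℕ)/a ≠ (y0:ℕ)/a)), hρc,
      Equiv.swap_apply_of_ne_of_ne (ne_of_block_ne bz1t1.symm : t1 ≠ z1)
        (ne_of_block_ne ((by rw [bt1]; exact bzt0.symm) : (t1:ℕ)/a ≠ (z0:ℕ)/a)),
      show ρd t1 = t0 from Equiv.swap_apply_left t1 t0]
  -- parity correction
  obtain ⟨p, q, hpq, hpB, hqB, hpz0, hqz0⟩ :=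
    exists_block_pair ha (bval_lt ha0 z0) z0
  have hswapfix : ∀ r : Fin (a * b), (r : ℕ) / a ≠ (z0 : ℕ) / a → Equiv.swap p q r = r := by
    intro r hr
    exact Equiv.swap_apply_of_ne_of_ne
      (ne_of_block_ne (by rw [hpB]; exact hr))
      (ne_of_block_ne (by rw [hqB]; exact hr))
  by_cases hsgn : Equiv.Perm.sign σ0 = 1
  · exact ⟨σ0, Equiv.Perm.mem_alternatingGroup.mpr hsgn, hwσ0, hσ0x, hσ0y, hσ0z, hσ0t⟩
  · have hsgn' : Equiv.Perm.sign σ0 = -1 := by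
      rcases Int.units_eq_one_or (Equiv.Perm.sign σ0) with h | h
      · exact absurd h hsgn
      · exact h
    refine ⟨Equiv.swap p q * σ0, ?_, wreathPres_mul (wreathPres_swap (hpB.trans hqB.symm)) hwσ0,
      ?_, ?_, ?_, ?_⟩
    · rw [Equiv.Perm.mem_alternatingGroup, map_mul, Equiv.Perm.sign_swap hpq, hsgn']
      norm_num
    · rw [Equiv.Perm.mul_apply, hσ0x]
      exact hswapfix x0 bxz0
    · rw [Equiv.Perm.mul_apply, hσ0y]
      exact hswapfix y0 (by rw [← bxy0]; exact bxz0)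
    · rw [Equiv.Perm.mul_apply, hσ0z]
      exact Equiv.swap_apply_of_ne_of_ne (Ne.symm hpz0) (Ne.symm hqz0)
    · rw [Equiv.Perm.mul_apply, hσ0t]
      exact hswapfix t0 bzt0.symm

end TransSect
section InvSect
variable {F : Type} [Field F] {a b : ℕ}

/-- invariance hypothesis in pointwise form -/
def HinvP (F : Type) [Field F] (a b : ℕ) (v : M2 F (a * b)) : Prop :=
  ∀ σ : Equiv.Perm (Fin (a * b)), σ ∈ alternatingGroup (Fin (a * b)) →
    wreathPres (a * b) a σ → ∃ lam : F, ∃ mu : Fin (a * b) → F,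
      ∀ x y (_ : x ≠ y), Vv v (σ x) (σ y) = Vv v x y + lam + mu x + mu y

lemma R_perm {v : M2 F (a * b)} (hv : HinvP F a b v) {σ : Equiv.Perm (Fin (a * b))}
    (hσ1 : σ ∈ alternatingGroup (Fin (a * b))) (hσ2 : wreathPres (a * b) a σ)
    {x y z t : Fin (a * b)} (hxy : x ≠ y) (hzt : z ≠ t) (hxz : x ≠ z) (hyt : y ≠ t) :
    Rv v (σ x) (σ y) (σ z) (σ t) = Rv v x y z t := by
  obtain ⟨lam, mu, hlm⟩ := hv σ hσ1 hσ2
  unfold Rv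
  rw [hlm x y hxy, hlm z t hzt, hlm x z hxz, hlm y t hyt]
  ring

lemma lt_ab_0 (ha : 3 ≤ a) (hb : 3 ≤ b) : 0 < a * b := by nlinarith
lemma lt_ab_1 (ha : 3 ≤ a) (hb : 3 ≤ b) : 1 < a * b := by nlinarith
lemma lt_ab_a (ha : 3 ≤ a) (hb : 3 ≤ b) : a < a * b := by nlinarith
lemma lt_ab_2a (ha : 3 ≤ a) (hb : 3 ≤ b) : 2 * a < a * b := by nlinarith

/-- the reference constant c -/
def cRef (ha : 3 ≤ a) (hb : 3 ≤ b) (v : M2 F (a * b)) : F :=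
  Rv v ⟨0, lt_ab_0 ha hb⟩ ⟨1, lt_ab_1 ha hb⟩ ⟨a, lt_ab_a ha hb⟩ ⟨2 * a, lt_ab_2a ha hb⟩

/-- K1 : the basic reference rule -/
lemma K1 (ha : 3 ≤ a) (hb : 3 ≤ b) {v : M2 F (a * b)} (hv : HinvP F a b v)
    {x y z t : Fin (a * b)} (hxy : x ≠ y) (bxy : (x : ℕ) / a = (y : ℕ) / a)
    (bxz : (x : ℕ) / a ≠ (z : ℕ) / a) (bxt : (x : ℕ) / a ≠ (t : ℕ) / a)
    (bzt : (z : ℕ) / a ≠ (t : ℕ) / a) :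
    Rv v x y z t = cRef ha hb v := by
  have ha0 : 0 < a := by omega
  set p0 : Fin (a * b) := ⟨0, lt_ab_0 ha hb⟩ with hp0
  set p1 : Fin (a * b) := ⟨1, lt_ab_1 ha hb⟩ with hp1
  set pa : Fin (a * b) := ⟨a, lt_ab_a ha hb⟩ with hpa
  set p2a : Fin (a * b) := ⟨2 * a, lt_ab_2a ha hb⟩ with hp2a
  have bp0 : (p0 : ℕ) / a = 0 := Nat.div_eq_of_lt ha0
  have bp1 : (p1 : ℕ) / a = 0 := Nat.div_eq_of_lt (show (1:ℕ) < a by omega)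
  have bpa : (pa : ℕ) / a = 1 := Nat.div_self ha0
  have bp2a : (p2a : ℕ) / a = 2 := by
    show 2 * a / a = 2
    rw [Nat.mul_div_cancel 2 ha0]
  obtain ⟨σ, hσ1, hσ2, e1, e2, e3, e4⟩ := trans_lemma ha hb x y z t p0 p1 pa p2a
    hxy bxy bxz bxt bzt
    (fun h => absurd (congrArg Fin.val h) (by simp [hp0, hp1]))
    (bp0.trans bp1.symm)
    (by rw [bp0, bpa]; omega)
    (by rw [bp0, bp2a]; omega)
    (by rw [bpa, bp2a]; omega)
  have hR := R_perm hv hσ1 hσ2 hxy (ne_of_block_ne bzt) (ne_of_block_ne bxz)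
    (ne_of_block_ne (bxy ▸ bxt : (y : ℕ) / a ≠ (t : ℕ) / a))
  rw [e1, e2, e3, e4] at hR
  exact hR.symm

end InvSect
section RuleSect
variable {F : Type} [Field F] {a b : ℕ}

lemma exists_third_block (hb : 3 ≤ b) (B1 B2 : ℕ) :
    ∃ C, C < b ∧ C ≠ B1 ∧ C ≠ B2 := by
  by_cases h1 : B1 = 0
  · by_cases h2 : B2 = 1
    · exact ⟨2, by omega, by omega, by omega⟩
    · exact ⟨1, by omega, by omega, by omega⟩
  · by_cases h2 : B2 = 0
    · by_cases h3 : B1 = 1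
      · exact ⟨2, by omega, by omega, by omega⟩
      · exact ⟨1, by omega, by omega, by omega⟩
    · exact ⟨0, by omega, by omega, by omega⟩

lemma exists_fresh_pt (ha : 3 ≤ a) (hb : 3 ≤ b) (B1 B2 : ℕ) :
    ∃ s : Fin (a * b), (s : ℕ) / a ≠ B1 ∧ (s : ℕ) / a ≠ B2 := by
  have ha0 : 0 < a := by omega
  obtain ⟨C, hC, h1, h2⟩ := exists_third_block hb B1 B2
  refine ⟨⟨a * C + 0, mkInBlock_lt ha0 hC (by omega)⟩, ?_, ?_⟩
  · exact fun h => h1 ((mkInBlock_block ha0 (by omega : (0:ℕ) < a)).symm.trans h)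
  · exact fun h => h2 ((mkInBlock_block ha0 (by omega : (0:ℕ) < a)).symm.trans h)

lemma exists_sameblock (ha : 3 ≤ a) (w : Fin (a * b)) :
    ∃ s : Fin (a * b), (s : ℕ) / a = (w : ℕ) / a ∧ s ≠ w := by
  have ha0 : 0 < a := by omega
  obtain ⟨p, q, hpq, hpB, hqB, hpw, hqw⟩ := exists_block_pair ha (bval_lt ha0 w) w
  exact ⟨p, hpB, hpw⟩

variable (ha : 3 ≤ a) (hb : 3 ≤ b) {v : M2 F (a * b)} (hv : HinvP F a b v)

include ha hb hv

lemma K34 {x y z t : Fin (a * b)} (hzt : z ≠ t) (bzt : (z : ℕ) / a = (t : ℕ) / a)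
    (bxy : (x : ℕ) / a ≠ (y : ℕ) / a) (bxz : (x : ℕ) / a ≠ (z : ℕ) / a)
    (byz : (y : ℕ) / a ≠ (z : ℕ) / a) :
    Rv v x y z t = cRef ha hb v := by
  rw [Rv_g1]
  exact K1 ha hb hv hzt bzt bxz.symm byz.symm bxy

lemma K13 {x y z t : Fin (a * b)} (hxz : x ≠ z) (bxz : (x : ℕ) / a = (z : ℕ) / a)
    (bxy : (x : ℕ) / a ≠ (y : ℕ) / a) (bxt : (x : ℕ) / a ≠ (t : ℕ) / a)
    (byt : (y : ℕ) / a ≠ (t : ℕ) / a) :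
    Rv v x y z t = - cRef ha hb v := by
  rw [Rv_anti23, K1 ha hb hv hxz bxz bxy bxt byt]

lemma K24 {x y z t : Fin (a * b)} (hyt : y ≠ t) (byt : (y : ℕ) / a = (t : ℕ) / a)
    (byx : (y : ℕ) / a ≠ (x : ℕ) / a) (byz : (y : ℕ) / a ≠ (z : ℕ) / a)
    (bxz : (x : ℕ) / a ≠ (z : ℕ) / a) :
    Rv v x y z t = - cRef ha hb v := by
  rw [Rv_g2, Rv_anti23, K1 ha hb hv hyt byt byx byz bxz]

lemma K14 {x y z t : Fin (a * b)} (hxt : x ≠ t) (bxt : (x : ℕ) / a = (t : ℕ) / a)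
    (bxy : (x : ℕ) / a ≠ (y : ℕ) / a) (bxz : (x : ℕ) / a ≠ (z : ℕ) / a)
    (byz : (y : ℕ) / a ≠ (z : ℕ) / a) :
    Rv v x y z t = 0 := by
  obtain ⟨s, bs, hsy⟩ := exists_sameblock ha y
  rw [Rv_cocycle1 v x y z t s]
  have h1 : Rv v x y z s = - cRef ha hb v :=
    K24 ha hb hv hsy.symm bs.symm bxy.symm byz bxz
  have h2 : Rv v s y z t = cRef ha hb v :=
    K1 ha hb hv hsy bs
      (by rw [bs]; exact byz) (by rw [bs, ← bxt]; exact bxy.symm)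
      (by rw [← bxt]; exact bxz.symm)
  rw [h1, h2]; ring

lemma K23 {x y z t : Fin (a * b)} (hyz : y ≠ z) (byz : (y : ℕ) / a = (z : ℕ) / a)
    (byx : (y : ℕ) / a ≠ (x : ℕ) / a) (byt : (y : ℕ) / a ≠ (t : ℕ) / a)
    (bxt : (x : ℕ) / a ≠ (t : ℕ) / a) :
    Rv v x y z t = 0 := by
  rw [Rv_g2]
  exact K14 ha hb hv hyz byz byx byt bxt

lemma T_xyz {x y z t : Fin (a * b)} (hxy : x ≠ y) (hxz : x ≠ z) (hyz : y ≠ z)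
    (bxy : (x : ℕ) / a = (y : ℕ) / a) (bxz : (x : ℕ) / a = (z : ℕ) / a)
    (bxt : (x : ℕ) / a ≠ (t : ℕ) / a) :
    Rv v x y z t = 0 := by
  obtain ⟨s, hs1, hs2⟩ := exists_fresh_pt ha hb ((x : ℕ) / a) ((t : ℕ) / a)
  rw [Rv_cocycle2 v x y z t s]
  have h1 : Rv v x y s t = cRef ha hb v :=
    K1 ha hb hv hxy bxy (Ne.symm hs1) bxt hs2
  have h2 : Rv v x s z t = - cRef ha hb v :=
    K13 ha hb hv hxz bxz (Ne.symm hs1) bxt hs2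
  rw [h1, h2]; ring

lemma T_xyt {x y z t : Fin (a * b)} (hxy : x ≠ y) (hyt : y ≠ t)
    (bxy : (x : ℕ) / a = (y : ℕ) / a) (bxt2 : (x : ℕ) / a = (t : ℕ) / a)
    (bxz : (x : ℕ) / a ≠ (z : ℕ) / a) :
    Rv v x y z t = 0 := by
  obtain ⟨s, hs1, hs2⟩ := exists_fresh_pt ha hb ((x : ℕ) / a) ((z : ℕ) / a)
  rw [Rv_cocycle1 v x y z t s]
  have h1 : Rv v x y z s = cRef ha hb v :=
    K1 ha hb hv hxy bxy bxz (Ne.symm hs1) (Ne.symm hs2)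
  have h2 : Rv v s y z t = - cRef ha hb v :=
    K24 ha hb hv hyt (bxy.symm.trans bxt2) (by rw [← bxy]; exact Ne.symm hs1)
      (by rw [← bxy]; exact bxz) hs2
  rw [h1, h2]; ring

lemma T_xzt {x y z t : Fin (a * b)} (hxz : x ≠ z) (hzt : z ≠ t)
    (bxz2 : (x : ℕ) / a = (z : ℕ) / a) (bxt2 : (x : ℕ) / a = (t : ℕ) / a)
    (bxy : (x : ℕ) / a ≠ (y : ℕ) / a) :
    Rv v x y z t = 0 := by
  obtain ⟨s, hs1, hs2⟩ := exists_fresh_pt ha hb ((x : ℕ) / a) ((y : ℕ) / a)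
  rw [Rv_cocycle1 v x y z t s]
  have h1 : Rv v x y z s = - cRef ha hb v :=
    K13 ha hb hv hxz bxz2 bxy (Ne.symm hs1) (Ne.symm hs2)
  have h2 : Rv v s y z t = cRef ha hb v :=
    K34 ha hb hv hzt (bxz2.symm.trans bxt2) hs2 (by rw [← bxz2]; exact hs1)
      (by rw [← bxz2]; exact bxy.symm)
  rw [h1, h2]; ring

lemma T_yzt {x y z t : Fin (a * b)} (hyt : y ≠ t) (hzt : z ≠ t)
    (byz2 : (y : ℕ) / a = (z : ℕ) / a) (byt2 : (y : ℕ) / a = (t : ℕ) / a)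
    (bxy : (x : ℕ) / a ≠ (y : ℕ) / a) :
    Rv v x y z t = 0 := by
  obtain ⟨u, hu1, hu2⟩ := exists_fresh_pt ha hb ((y : ℕ) / a) ((x : ℕ) / a)
  rw [Rv_cocycle2 v x y z t u]
  have h1 : Rv v x y u t = - cRef ha hb v :=
    K24 ha hb hv hyt byt2 bxy.symm (Ne.symm hu1) (Ne.symm hu2)
  have h2 : Rv v x u z t = cRef ha hb v :=
    K34 ha hb hv hzt (byz2.symm.trans byt2) (Ne.symm hu2)
      (by rw [← byz2]; exact bxy) (by rw [← byz2]; exact hu1)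
  rw [h1, h2]; ring

lemma T_all4 {x y z t : Fin (a * b)} (hxy : x ≠ y) (hxz : x ≠ z) (hyz : y ≠ z)
    (hyt : y ≠ t) (hzt : z ≠ t)
    (bxy : (x : ℕ) / a = (y : ℕ) / a) (bxz2 : (x : ℕ) / a = (z : ℕ) / a)
    (bxt2 : (x : ℕ) / a = (t : ℕ) / a) :
    Rv v x y z t = 0 := by
  obtain ⟨s, hs1, _⟩ := exists_fresh_pt ha hb ((x : ℕ) / a) ((x : ℕ) / a)
  rw [Rv_cocycle1 v x y z t s]
  have h1 : Rv v x y z s = 0 := T_xyz ha hb hv hxy hxz hyz bxy bxz2 (Ne.symm hs1)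
  have h2 : Rv v s y z t = 0 :=
    T_yzt ha hb hv hyt hzt (bxy.symm.trans bxz2) (bxy.symm.trans bxt2)
      (by rw [← bxy]; exact hs1)
  rw [h1, h2]; ring

lemma T22a {x y z t : Fin (a * b)} (hxy : x ≠ y) (hzt : z ≠ t)
    (bxy : (x : ℕ) / a = (y : ℕ) / a) (bzt2 : (z : ℕ) / a = (t : ℕ) / a)
    (bxz : (x : ℕ) / a ≠ (z : ℕ) / a) :
    Rv v x y z t = 2 * cRef ha hb v := by
  obtain ⟨s, hs1, hs2⟩ := exists_fresh_pt ha hb ((x : ℕ) / a) ((z : ℕ) / a)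
  rw [Rv_cocycle1 v x y z t s]
  have h1 : Rv v x y z s = cRef ha hb v :=
    K1 ha hb hv hxy bxy bxz (Ne.symm hs1) (Ne.symm hs2)
  have h2 : Rv v s y z t = cRef ha hb v :=
    K34 ha hb hv hzt bzt2 (by rw [← bxy]; exact hs1) hs2 (by rw [← bxy]; exact bxz)
  rw [h1, h2]; ring

lemma T22b {x y z t : Fin (a * b)} (hxz : x ≠ z) (hyt : y ≠ t)
    (bxz2 : (x : ℕ) / a = (z : ℕ) / a) (byt2 : (y : ℕ) / a = (t : ℕ) / a)
    (bxy : (x : ℕ) / a ≠ (y : ℕ) / a) :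
    Rv v x y z t = - (2 * cRef ha hb v) := by
  rw [Rv_anti23, T22a ha hb hv hxz hyt bxz2 byt2 bxy]

lemma T22c {x y z t : Fin (a * b)} (hxt : x ≠ t) (hyz : y ≠ z)
    (bxt2 : (x : ℕ) / a = (t : ℕ) / a) (byz2 : (y : ℕ) / a = (z : ℕ) / a)
    (bxy : (x : ℕ) / a ≠ (y : ℕ) / a) :
    Rv v x y z t = 0 := by
  obtain ⟨u, hu1, hu2⟩ := exists_fresh_pt ha hb ((x : ℕ) / a) ((y : ℕ) / a)
  rw [Rv_cocycle2 v x y z t u]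
  have h1 : Rv v x y u t = 0 :=
    K14 ha hb hv hxt bxt2 bxy (Ne.symm hu1) (Ne.symm hu2)
  have h2 : Rv v x u z t = 0 :=
    K14 ha hb hv hxt bxt2 (Ne.symm hu1) (by rw [← byz2]; exact bxy)
      (by rw [← byz2]; exact hu2)
  rw [h1, h2]; ring

lemma T1111 {x y z t : Fin (a * b)}
    (bxy : (x : ℕ) / a ≠ (y : ℕ) / a) (bxz : (x : ℕ) / a ≠ (z : ℕ) / a)
    (bxt : (x : ℕ) / a ≠ (t : ℕ) / a) (byz : (y : ℕ) / a ≠ (z : ℕ) / a)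
    (byt : (y : ℕ) / a ≠ (t : ℕ) / a) (bzt : (z : ℕ) / a ≠ (t : ℕ) / a) :
    Rv v x y z t = 0 := by
  obtain ⟨s, bs, hsy⟩ := exists_sameblock ha y
  rw [Rv_cocycle1 v x y z t s]
  have h1 : Rv v x y z s = - cRef ha hb v :=
    K24 ha hb hv hsy.symm bs.symm bxy.symm byz bxz
  have h2 : Rv v s y z t = cRef ha hb v :=
    K1 ha hb hv hsy bs (by rw [bs]; exact byz) (by rw [bs]; exact byt) bzt
  rw [h1, h2]; ring

/-- the main computation: `R_v = c · pat` on distinct quadruples -/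
lemma crux {x y z t : Fin (a * b)} (hxy : x ≠ y) (hxz : x ≠ z) (hxt : x ≠ t)
    (hyz : y ≠ z) (hyt : y ≠ t) (hzt : z ≠ t) :
    Rv v x y z t = cRef ha hb v *
      ((if (x : ℕ) / a = (y : ℕ) / a then (1:F) else 0)
        + (if (z : ℕ) / a = (t : ℕ) / a then (1:F) else 0)
        - (if (x : ℕ) / a = (z : ℕ) / a then (1:F) else 0)
        - (if (y : ℕ) / a = (t : ℕ) / a then (1:F) else 0)) := by
  by_cases bxy : (x : ℕ) / a = (y : ℕ) / a
  · by_cases bxz : (x : ℕ) / a = (z : ℕ) / a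
    · by_cases bxt : (x : ℕ) / a = (t : ℕ) / a
      · rw [T_all4 ha hb hv hxy hxz hyz hyt hzt bxy bxz bxt,
          if_pos bxy, if_pos (bxz.symm.trans bxt), if_pos bxz,
          if_pos (bxy.symm.trans bxt)]
        ring
      · rw [T_xyz ha hb hv hxy hxz hyz bxy bxz bxt,
          if_pos bxy, if_neg (fun h => bxt (bxz.trans h)), if_pos bxz,
          if_neg (fun h => bxt (bxy.trans h))]
        ring
    · by_cases bxt : (x : ℕ) / a = (t : ℕ) / a
      · rw [T_xyt ha hb hv hxy hyt bxy bxt bxz,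
          if_pos bxy, if_neg (fun h => bxz (bxt.trans h.symm)), if_neg bxz,
          if_pos (bxy.symm.trans bxt)]
        ring
      · by_cases bzt : (z : ℕ) / a = (t : ℕ) / a
        · rw [T22a ha hb hv hxy hzt bxy bzt bxz,
            if_pos bxy, if_pos bzt, if_neg bxz, if_neg (fun h => bxt (bxy.trans h))]
          ring
        · rw [K1 ha hb hv hxy bxy bxz bxt bzt,
            if_pos bxy, if_neg bzt, if_neg bxz, if_neg (fun h => bxt (bxy.trans h))]
          ring
  · by_cases bxz : (x : ℕ) / a = (z : ℕ) / a
    · by_cases bxt : (x : ℕ) / a = (t : ℕ) / a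
      · rw [T_xzt ha hb hv hxz hzt bxz bxt bxy,
          if_neg bxy, if_pos (bxz.symm.trans bxt), if_pos bxz,
          if_neg (fun h => bxy (bxt.trans h.symm))]
        ring
      · by_cases byt : (y : ℕ) / a = (t : ℕ) / a
        · rw [T22b ha hb hv hxz hyt bxz byt bxy,
            if_neg bxy, if_neg (fun h => bxt (bxz.trans h)), if_pos bxz, if_pos byt]
          ring
        · rw [K13 ha hb hv hxz bxz bxy bxt byt,
            if_neg bxy, if_neg (fun h => bxt (bxz.trans h)), if_pos bxz, if_neg byt]
          ring
    · by_cases bxt : (x : ℕ) / a = (t : ℕ) / a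
      · by_cases byz : (y : ℕ) / a = (z : ℕ) / a
        · rw [T22c ha hb hv hxt hyz bxt byz bxy,
            if_neg bxy, if_neg (fun h => bxz (bxt.trans h.symm)), if_neg bxz,
            if_neg (fun h => bxy (bxt.trans h.symm))]
          ring
        · rw [K14 ha hb hv hxt bxt bxy bxz byz,
            if_neg bxy, if_neg (fun h => bxz (bxt.trans h.symm)), if_neg bxz,
            if_neg (fun h => bxy (bxt.trans h.symm))]
          ring
      · by_cases byz : (y : ℕ) / a = (z : ℕ) / a
        · by_cases byt : (y : ℕ) / a = (t : ℕ) / a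
          · rw [T_yzt ha hb hv hyt hzt byz byt bxy,
              if_neg bxy, if_pos (byz.symm.trans byt), if_neg bxz, if_pos byt]
            ring
          · rw [K23 ha hb hv hyz byz (Ne.symm bxy) byt bxt,
              if_neg bxy, if_neg (fun h => byt (byz.trans h)), if_neg bxz, if_neg byt]
            ring
        · by_cases byt : (y : ℕ) / a = (t : ℕ) / a
          · rw [K24 ha hb hv hyt byt (Ne.symm bxy) byz bxz,
              if_neg bxy, if_neg (fun h => byz (byt.trans h.symm)), if_neg bxz,
              if_pos byt]
            ring
          · by_cases bzt : (z : ℕ) / a = (t : ℕ) / a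
            · rw [K34 ha hb hv hzt bzt bxy bxz byz,
                if_neg bxy, if_pos bzt, if_neg bxz, if_neg byt]
              ring
            · rw [T1111 ha hb hv bxy bxz bxt byz byt bzt,
                if_neg bxy, if_neg bzt, if_neg bxz, if_neg byt]
              ring

end RuleSect
section AffineSect
variable {F : Type} [Field F] {n : ℕ}

lemma affine_reconstruct (hn : 7 ≤ n) (U : Fin n → Fin n → F)
    (hsymm : ∀ x y, U x y = U y x)
    (hrect : ∀ x y z t : Fin n, x ≠ y → x ≠ z → x ≠ t → y ≠ z → y ≠ t → z ≠ t →
      U x y + U z t = U x z + U y t) :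
    ∃ lam : F, ∃ mu : Fin n → F, ∀ x y, x ≠ y → U x y = lam + mu x + mu y := by
  have h0 : (0 : ℕ) < n := by omega
  set o : Fin n := ⟨0, by omega⟩ with ho
  set e1 : Fin n := ⟨1, by omega⟩ with he1
  set e2 : Fin n := ⟨2, by omega⟩ with he2
  have hoe1 : o ≠ e1 := fun h => by simpa [ho, he1, Fin.ext_iff] using h
  have hoe2 : o ≠ e2 := fun h => by simpa [ho, he2, Fin.ext_iff] using h
  have he12 : e1 ≠ e2 := fun h => by simpa [he1, he2, Fin.ext_iff] using h
  set lam : F := U e1 o + U e2 o - U e1 e2 with hlam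
  have Sstep : ∀ x y y' : Fin n, x ≠ o → y ≠ o → y' ≠ o → x ≠ y → x ≠ y' → y ≠ y' →
      U x o + U y o - U x y = U x o + U y' o - U x y' := by
    intro x y y' hxo hyo hy'o hxy hxy' hyy'
    have h := hrect x y' y o hxy' hxy hxo (Ne.symm hyy') hy'o hyo
    linear_combination h
  have Ssym : ∀ x y : Fin n, U x o + U y o - U x y = U y o + U x o - U y x := by
    intro x y
    rw [hsymm x y]
    ring
  have key : ∀ x y : Fin n, x ≠ o → y ≠ o → x ≠ y →
      U x o + U y o - U x y = lam := by
    intro x y hxo hyo hxy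
    -- find two fresh points
    have hcard : ({o, e1, e2, x, y} : Finset (Fin n)).card ≤ 5 := by
      apply le_trans (Finset.card_insert_le _ _)
      apply Nat.succ_le_succ
      apply le_trans (Finset.card_insert_le _ _)
      apply Nat.succ_le_succ
      apply le_trans (Finset.card_insert_le _ _)
      apply Nat.succ_le_succ
      apply le_trans (Finset.card_insert_le _ _)
      apply Nat.succ_le_succ
      simp
    have hcompl : 1 < (({o, e1, e2, x, y} : Finset (Fin n))ᶜ).card := by
      rw [Finset.card_compl]
      have : Fintype.card (Fin n) = n := Fintype.card_fin n
      omega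
    obtain ⟨z, hz, w, hw, hzw⟩ := Finset.one_lt_card.mp hcompl
    rw [Finset.mem_compl] at hz hw
    simp only [Finset.mem_insert, Finset.mem_singleton, not_or] at hz hw
    obtain ⟨hzo, hze1, hze2, hzx, hzy⟩ := hz
    obtain ⟨hwo, hwe1, hwe2, hwx, hwy⟩ := hw
    calc U x o + U y o - U x y
        = U x o + U z o - U x z := Sstep x y z hxo hyo hzo hxy (Ne.symm hzx) (Ne.symm hzy)
      _ = U z o + U x o - U z x := Ssym x z
      _ = U z o + U w o - U z w := Sstep z x w hzo hxo hwo hzx hzw (Ne.symm hwx)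
      _ = U w o + U z o - U w z := Ssym z w
      _ = U w o + U e1 o - U w e1 := Sstep w z e1 hwo hzo (Ne.symm hoe1) (Ne.symm hzw) hwe1 hze1
      _ = U e1 o + U w o - U e1 w := Ssym w e1
      _ = U e1 o + U e2 o - U e1 e2 := Sstep e1 w e2 (Ne.symm hoe1) hwo (Ne.symm hoe2) (Ne.symm hwe1) he12 hwe2
      _ = lam := hlam.symm
  refine ⟨lam, fun x => if x = o then 0 else U x o - lam, fun x y hxy => ?_⟩
  show U x y = lam + (if x = o then 0 else U x o - lam) + (if y = o then 0 else U y o - lam)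
  by_cases hxo : x = o
  · have hyo : ¬ y = o := fun h => hxy (by rw [hxo, h])
    rw [if_pos hxo, if_neg hyo, hxo, hsymm o y]
    ring
  · by_cases hyo : y = o
    · rw [if_neg hxo, if_pos hyo, hyo]
      ring
    · rw [if_neg hxo, if_neg hyo]
      have h := key x y hxo hyo hxy
      linear_combination -h

end AffineSect

section WSect
variable {F : Type} [Field F] {a b : ℕ}

/-- the invariant function: indicator of intra-block pairs -/
def wfun (F : Type) [Field F] (a b : ℕ) : M2 F (a * b) :=
  fun A => if ∀ i ∈ A.1, ∀ j ∈ A.1, (i : ℕ) / a = (j : ℕ) / a then 1 else 0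

lemma wfun_pr (x y : Fin (a * b)) (h : x ≠ y) :
    wfun F a b (pr x y h) = if (x : ℕ) / a = (y : ℕ) / a then 1 else 0 := by
  unfold wfun
  by_cases hxy : (x : ℕ) / a = (y : ℕ) / a
  · rw [if_pos hxy, if_pos]
    intro i hi j hj
    have hmem : ∀ k, k ∈ (pr x y h).1 → k = x ∨ k = y := by
      intro k hk
      simpa [pr, Finset.mem_insert, Finset.mem_singleton] using hk
    rcases hmem i hi with rfl | rfl <;> rcases hmem j hj with rfl | rfl <;>
      first | rfl | exact hxy | exact hxy.symm
  · rw [if_neg hxy, if_neg]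
    intro hall
    exact hxy (hall x (by simp [pr]) y (by simp [pr]))

lemma wfun_perm {σ : Equiv.Perm (Fin (a * b))} (hσ : wreathPres (a * b) a σ) :
    (fun A => wfun F a b (permPair σ A)) = wfun F a b := by
  funext A
  obtain ⟨x, y, hxy, rfl⟩ := pair_eq_pr A
  rw [permPair_pr, wfun_pr, wfun_pr _ _ hxy]
  exact if_congr (hσ x y).symm rfl rfl

lemma comp_perm_mem_Ksub {u : M2 F (a * b)} (σ : Equiv.Perm (Fin (a * b)))
    (hu : u ∈ Ksub F (a * b)) : (fun A => u (permPair σ A)) ∈ Ksub F (a * b) := by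
  rw [mem_Ksub_iff] at hu ⊢
  obtain ⟨lam, mu, hlm⟩ := hu
  refine ⟨lam, fun x => mu (σ x), fun x y h => ?_⟩
  show u (permPair σ (pr x y h)) = _
  rw [permPair_pr]
  exact hlm (σ x) (σ y) _

end WSect
section NonzeroSect
variable {F : Type} [Field F] {a b : ℕ}

lemma wfun_not_mem (ha : 3 ≤ a) (hb : 3 ≤ b) : wfun F a b ∉ Ksub F (a * b) := by
  have ha0 : 0 < a := by omega
  intro hmem
  rw [mem_Ksub_iff] at hmem
  obtain ⟨lam, mu, hlm⟩ := hmem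
  set P0 : Fin (a*b) := ⟨0, lt_ab_0 ha hb⟩ with hP0
  set P1 : Fin (a*b) := ⟨1, lt_ab_1 ha hb⟩ with hP1
  set Pa : Fin (a*b) := ⟨a, lt_ab_a ha hb⟩ with hPa
  set Pa1 : Fin (a*b) := ⟨a+1, by nlinarith⟩ with hPa1
  set P2a : Fin (a*b) := ⟨2*a, lt_ab_2a ha hb⟩ with hP2a
  set P2a1 : Fin (a*b) := ⟨2*a+1, by nlinarith⟩ with hP2a1
  have b0 : (P0 : ℕ)/a = 0 := Nat.div_eq_of_lt ha0
  have b1 : (P1 : ℕ)/a = 0 := Nat.div_eq_of_lt (show (1:ℕ) < a by omega)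
  have bA : (Pa : ℕ)/a = 1 := Nat.div_self ha0
  have bA1 : (Pa1 : ℕ)/a = 1 := by
    show (a+1)/a = 1
    rw [show a+1 = a*1+1 by ring]
    exact mkInBlock_block ha0 (by omega)
  have b2A : (P2a : ℕ)/a = 2 := by
    show (2*a)/a = 2
    rw [show 2*a = a*2+0 by ring]
    exact mkInBlock_block ha0 (by omega)
  have b2A1 : (P2a1 : ℕ)/a = 2 := by
    show (2*a+1)/a = 2
    rw [show 2*a+1 = a*2+1 by ring]
    exact mkInBlock_block ha0 (by omega)
  have ne01 : P0 ≠ P1 := fun h => by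
    have : (0:ℕ) = 1 := congrArg Fin.val h
    omega
  have neA : Pa ≠ Pa1 := fun h => by
    have : (a:ℕ) = a+1 := congrArg Fin.val h
    omega
  have ne2A : P2a ≠ P2a1 := fun h => by
    have : (2*a:ℕ) = 2*a+1 := congrArg Fin.val h
    omega
  have ne0A : P0 ≠ Pa := ne_of_block_ne (by rw [b0, bA]; omega)
  have ne1A1 : P1 ≠ Pa1 := ne_of_block_ne (by rw [b1, bA1]; omega)
  have ne1A : P1 ≠ Pa := ne_of_block_ne (by rw [b1, bA]; omega)
  have neA12A : Pa1 ≠ P2a := ne_of_block_ne (by rw [bA1, b2A]; omega)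
  have ne2A10 : P2a1 ≠ P0 := ne_of_block_ne (by rw [b2A1, b0]; omega)
  have E1 : (1:F) = lam + mu P0 + mu P1 := by
    have h := hlm P0 P1 ne01
    rwa [wfun_pr P0 P1 ne01, if_pos (by rw [b0, b1])] at h
  have E2 : (1:F) = lam + mu Pa + mu Pa1 := by
    have h := hlm Pa Pa1 neA
    rwa [wfun_pr Pa Pa1 neA, if_pos (by rw [bA, bA1])] at h
  have E3 : (1:F) = lam + mu P2a + mu P2a1 := by
    have h := hlm P2a P2a1 ne2A
    rwa [wfun_pr P2a P2a1 ne2A, if_pos (by rw [b2A, b2A1])] at h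
  have E4 : (0:F) = lam + mu P0 + mu Pa := by
    have h := hlm P0 Pa ne0A
    rwa [wfun_pr P0 Pa ne0A, if_neg (by rw [b0, bA]; omega)] at h
  have E5 : (0:F) = lam + mu P1 + mu Pa1 := by
    have h := hlm P1 Pa1 ne1A1
    rwa [wfun_pr P1 Pa1 ne1A1, if_neg (by rw [b1, bA1]; omega)] at h
  have E6 : (0:F) = lam + mu P1 + mu Pa := by
    have h := hlm P1 Pa ne1A
    rwa [wfun_pr P1 Pa ne1A, if_neg (by rw [b1, bA]; omega)] at h
  have E7 : (0:F) = lam + mu Pa1 + mu P2a := by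
    have h := hlm Pa1 P2a neA12A
    rwa [wfun_pr Pa1 P2a neA12A, if_neg (by rw [bA1, b2A]; omega)] at h
  have E8 : (0:F) = lam + mu P2a1 + mu P0 := by
    have h := hlm P2a1 P0 ne2A10
    rwa [wfun_pr P2a1 P0 ne2A10, if_neg (by rw [b2A1, b0]; omega)] at h
  have h2 : (2:F) = 0 := by linear_combination E1 + E2 - E4 - E5
  have h3 : (3:F) = 0 := by linear_combination E1 + E2 + E3 - E6 - E7 - E8
  exact one_ne_zero (by linear_combination h3 - h2 : (1:F) = 0)

end NonzeroSect
/-- For `n = ab ≥ 6` with `a, b ≥ 3`, we have `dim (S_2^*)^{G_{a,b}} = 1`. -/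
theorem stmt_13 (F : Type) [Field F] [IsAlgClosed F] (p : ℕ) [Fact p.Prime] [CharP F p]
    (a b : ℕ) (ha : 3 ≤ a) (hb : 3 ≤ b) (hn : 6 ≤ a * b) :
    ∃ q : S2quot F (a * b), q ≠ 0 ∧ S2invW F (a * b) a q ∧
      ∀ q' : S2quot F (a * b), S2invW F (a * b) a q' → ∃ c : F, q' = c • q := by
  refine ⟨Submodule.Quotient.mk (wfun F a b), ?_, ?_, ?_⟩
  · rw [Ne, Submodule.Quotient.mk_eq_zero]
    exact wfun_not_mem ha hb
  · intro σ hσ1 hσ2 v hv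
    have hvk : v - wfun F a b ∈ Ksub F (a * b) := (Submodule.Quotient.eq _).mp hv
    have hck := comp_perm_mem_Ksub σ hvk
    rw [Submodule.Quotient.eq]
    have heq : (fun A => v (permPair σ A)) - wfun F a b
        = fun A => (v - wfun F a b) (permPair σ A) := by
      funext A
      have hw := congrFun (wfun_perm (F := F) hσ2) A
      simp only [Pi.sub_apply]
      rw [← hw]
    rw [heq]
    exact hck
  · intro q' hq'
    obtain ⟨v, rfl⟩ := Submodule.Quotient.mk_surjective _ q'
    have hinv : HinvP F a b v := by
      intro σ h1 h2
      have hmk := hq' σ h1 h2 v rfl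
      have hk : (fun A => v (permPair σ A)) - v ∈ Ksub F (a * b) :=
        (Submodule.Quotient.eq _).mp hmk
      rw [mem_Ksub_iff] at hk
      obtain ⟨lam, mu, hlm⟩ := hk
      refine ⟨lam, mu, fun x y h => ?_⟩
      have h2' := hlm x y h
      have hσne : σ x ≠ σ y := fun he => h (σ.injective he)
      have hval : ((fun A => v (permPair σ A)) - v) (pr x y h)
          = Vv v (σ x) (σ y) - Vv v x y := by
        rw [Pi.sub_apply]
        show v (permPair σ (pr x y h)) - v (pr x y h) = _
        rw [permPair_pr, Vv_eq v (σ x) (σ y) hσne, Vv_eq v x y h]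
      rw [hval] at h2'
      linear_combination h2'
    set c := cRef ha hb v with hc
    set U : Fin (a * b) → Fin (a * b) → F :=
      fun x y => Vv v x y - c * (if (x : ℕ) / a = (y : ℕ) / a then 1 else 0) with hU
    have hUsymm : ∀ x y, U x y = U y x := by
      intro x y
      simp only [hU]
      rw [Vv_symm]
      by_cases hxy : (x : ℕ) / a = (y : ℕ) / a
      · rw [if_pos hxy, if_pos hxy.symm]
      · rw [if_neg hxy, if_neg (fun h => hxy h.symm)]
    have hUrect : ∀ x y z t : Fin (a * b), x ≠ y → x ≠ z → x ≠ t → y ≠ z → y ≠ t → z ≠ t →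
        U x y + U z t = U x z + U y t := by
      intro x y z t h1 h2 h3 h4 h5 h6
      have hcx := crux ha hb hinv h1 h2 h3 h4 h5 h6
      simp only [Rv] at hcx
      simp only [hU]
      linear_combination hcx
    obtain ⟨lam, mu, hUaff⟩ := affine_reconstruct (show 7 ≤ a * b by nlinarith) U hUsymm hUrect
    have hmem : v - c • wfun F a b ∈ Ksub F (a * b) := by
      rw [mem_Ksub_iff]
      refine ⟨lam, mu, fun x y h => ?_⟩
      have haff := hUaff x y h
      simp only [hU] at haff
      rw [Pi.sub_apply, Pi.smul_apply, smul_eq_mul, wfun_pr x y h, ← Vv_eq v x y h]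
      linear_combination haff
    refine ⟨c, ?_⟩
    calc (Submodule.Quotient.mk v : S2quot F (a * b))
        = Submodule.Quotient.mk (c • wfun F a b) := (Submodule.Quotient.eq _).mpr hmem
      _ = c • Submodule.Quotient.mk (wfun F a b) := Submodule.Quotient.mk_smul _ _ _
end
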